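/- For all n ≥ 0, J(n+1) = ⌈(n+1)/2⌉ + sum over j from 1 to n−1 of j·J(n−j), where J is the Jacobsthal sequence and ⌈·⌉ denotes the ceiling. -/
import Mathlib


def J : ℕ → ℕ
  | 0 => 0
  | 1 => 1
  | n + 2 => J (n + 1) + 2 * J n

lemma Jsum : ∀ n, J (n + 1) = 2 * ∑ k ∈ Finset.range n, J k + 1
  | 0 => rfl
  | n + 1 => by
    rw [Finset.sum_range_succ, show J (n+2) = J (n+1) + 2 * J n from rfl, Jsum n]
    ring

lemma Jparity : ∀ n, J (n + 1) + n % 2 = 2 * J n + (n + 1) % 2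
  | 0 => rfl
  | n + 1 => by
    have h := Jparity n
    rw [show J (n+2) = J (n+1) + 2 * J n from rfl]
    omega

lemma key : ∀ n, J (n + 1) = (n + 2) / 2 + ∑ k ∈ Finset.range n, (n - k) * J k
  | 0 => rfl
  | n + 1 => by
    have IH := key n
    have hT := Jsum n
    have hP := Jparity n
    have hsplit : ∑ k ∈ Finset.range (n+1), (n + 1 - k) * J k
        = (∑ k ∈ Finset.range n, (n - k) * J k) + (∑ k ∈ Finset.range n, J k) + J n := by
      rw [Finset.sum_range_succ]
      have : ∑ k ∈ Finset.range n, (n + 1 - k) * J k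
          = ∑ k ∈ Finset.range n, ((n - k) * J k + J k) := by
        apply Finset.sum_congr rfl
        intro k hk
        have : k < n := Finset.mem_range.mp hk
        have : n + 1 - k = (n - k) + 1 := by omega
        rw [this]; ring
      rw [this, Finset.sum_add_distrib, Nat.add_sub_cancel_left, one_mul]
    rw [hsplit, show J (n+2) = J (n+1) + 2 * J n from rfl]
    omega

theorem stmt12 (n : ℕ) :
    J (n + 1) = (n + 2) / 2 + ∑ j ∈ Finset.Icc 1 (n - 1), j * J (n - j) := by
  have h : ∑ j ∈ Finset.Icc 1 (n - 1), j * J (n - j)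
      = ∑ k ∈ Finset.range n, (n - k) * J k := by
    rcases n with _ | m
    · simp
    · rw [show m + 1 - 1 = m from rfl, ← Finset.Ico_add_one_right_eq_Icc,
        Finset.sum_Ico_eq_sum_range]
      rw [show m + 1 - 1 = m from rfl]
      -- LHS: ∑ i in range m, (1 + i) * J (m + 1 - (1 + i)) = ∑ i in range m, (i+1) * J (m - i)
      -- RHS: split off k = 0
      have : ∑ k ∈ Finset.range (m+1), (m + 1 - k) * J k
          = ∑ i ∈ Finset.range m, (m - i) * J (i + 1) := by
        rw [Finset.sum_range_succ']
        simp [J]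
      rw [this, ← Finset.sum_range_reflect]
      apply Finset.sum_congr rfl
      intro i hi
      have hi : i < m := Finset.mem_range.mp hi
      have h1 : 1 + (m - 1 - i) = m - i := by omega
      have h2 : m + 1 - (m - i) = i + 1 := by omega
      rw [h1, h2]
  rw [h, key]
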